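/- arXiv:1205.4092 — 2 statements merged into one kernel-verified Lean document; each statement's English description precedes it below -/
import Mathlib

section
/- Let W be a finite Coxeter group whose longest element w₀ is central, and let C be a conjugacy class of involutions in W. Define the W-representation V_C over ℝ with basis {a_w : w ∈ C} where, for s ∈ S and w ∈ C: s·a_w = −a_w if sw = ws and ℓ(sw) < ℓ(w), and s·a_w = a_{sws} otherwise. Let ρ_C be its character. Then ρ_{Cw₀} = ρ_C ⊗ ε, where ε is the sign character of W. -/
open scoped Classical

/-!
Multiplication by the central longest element `w₀` reverses lengths,
`ℓ (x w₀) = ℓ w₀ - ℓ x`, so a simple reflection commuting with `x` is a descent of exactly one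
of `x` and `x w₀`; and conjugating an involution `x` by a simple reflection that does not
commute with it changes its length by exactly `2`. Together these say that
`a_x ↦ (-1) ^ ⌊ℓ x / 2⌋ a_{x w₀}` is an isomorphism `V_C ⊗ ε ≅ V_{C w₀}`, whence the
character identity.

Both length facts are consequences of the strong exchange property, which we obtain from Tits'
sign cocycle: `W` acts on `W × {±1}` with `s` sending `(t, η)` to `(s t s, ±η)`, the sign
flipping exactly when `t = s`, and the sign picked up by `(t, 1)` under `w` is `-1` exactly
when `t` is a right inversion of `w`.
-/

theorem LinearMap.trace_eq_mul_trace_of_comp_eq {R M N : Type*} [CommRing R] [AddCommGroup M]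
    [Module R M] [AddCommGroup N] [Module R N] (e : M ≃ₗ[R] N) {f : M →ₗ[R] M}
    {g : N →ₗ[R] N} {c : R} (h : g ∘ₗ e = c • (e ∘ₗ f)) :
    LinearMap.trace R N g = c * LinearMap.trace R M f := by
  have : g = c • e.conj f := LinearMap.ext fun y => by
    simpa [LinearEquiv.conj_apply] using LinearMap.congr_fun h (e.symm y)
  rw [this, map_smul, LinearMap.trace_conj', smul_eq_mul]

namespace CoxeterSystem

variable {B W : Type*} [Group W] {M : CoxeterMatrix B} (cs : CoxeterSystem M W)

theorem simple_mul_mul_simple_eq_iff {i : B} {t u : W} :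
    cs.simple i * t * cs.simple i = u ↔ t = cs.simple i * u * cs.simple i := by
  constructor <;> rintro rfl <;> simp [mul_assoc, cs.simple_mul_simple_cancel_left]

noncomputable def simpleSignedConj (i : B) : Equiv.Perm (W × ℤˣ) :=
  Function.Involutive.toPerm
    (fun p => (cs.simple i * p.1 * cs.simple i, p.2 * if p.1 = cs.simple i then -1 else 1))
    (by
      rintro ⟨t, ε⟩
      have hs : cs.simple i * cs.simple i * cs.simple i = cs.simple i := by
        rw [cs.simple_mul_simple_self, one_mul]
      simp only [simple_mul_mul_simple_eq_iff, hs, Prod.mk.injEq, true_and]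
      by_cases ht : t = cs.simple i <;> simp [ht])

theorem simpleSignedConj_apply (i : B) (t : W) (ε : ℤˣ) :
    cs.simpleSignedConj i (t, ε) =
      (cs.simple i * t * cs.simple i, ε * if t = cs.simple i then -1 else 1) :=
  rfl

theorem simpleSignedConj_mul_pow_apply (i j : B) (k : ℕ) (t : W) (ε : ℤˣ) :
    ((cs.simpleSignedConj i * cs.simpleSignedConj j) ^ k) (t, ε) =
      ((cs.simple i * cs.simple j) ^ k * t * ((cs.simple i * cs.simple j) ^ k)⁻¹,
        ε * ∏ r ∈ Finset.range (2 * k),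
          if (cs.simple i * cs.simple j) ^ r * t = cs.simple j then -1 else 1) := by
  set p := cs.simple i * cs.simple j
  set f : W → ℕ → ℤˣ := fun t r => if p ^ r * t = cs.simple j then -1 else 1
  have hp_inv : p⁻¹ * cs.simple j = cs.simple j * cs.simple i * cs.simple j := by
    simp [p, cs.inv_simple]
  have hstep : ∀ t ε, (cs.simpleSignedConj i * cs.simpleSignedConj j) (t, ε) =
      (p * t * p⁻¹, ε * (f t 0 * f t 1)) := by
    intro t ε
    have hcond : cs.simple j * t * cs.simple j = cs.simple i ↔ p * t = cs.simple j := by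
      rw [simple_mul_mul_simple_eq_iff, ← eq_inv_mul_iff_mul_eq, hp_inv]
    ext
    · simp [simpleSignedConj_apply, p, mul_assoc, cs.inv_simple]
    · simp only [Equiv.Perm.mul_apply, simpleSignedConj_apply, hcond, f, pow_zero, pow_one,
        one_mul]
      rw [mul_assoc]
  have hshift : ∀ t r, f (p * t * p⁻¹) r = f t (r + 2) := by
    intro t r
    have hjp : cs.simple j * p = p⁻¹ * cs.simple j := by rw [hp_inv, ← mul_assoc]
    have : p ^ r * (p * t * p⁻¹) = cs.simple j ↔ p ^ (r + 2) * t = cs.simple j := by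
      rw [← mul_assoc, ← mul_assoc, mul_inv_eq_iff_eq_mul, hjp, eq_inv_mul_iff_mul_eq,
        show p * (p ^ r * p * t) = p ^ (r + 2) * t by group]
    simp only [f, this]
  change _ = (_, ε * ∏ r ∈ Finset.range (2 * k), f t r)
  induction k generalizing t ε with
  | zero => simp
  | succ k ih =>
    rw [pow_succ, Equiv.Perm.mul_apply, hstep, ih]
    ext
    · simp only [pow_succ, mul_inv_rev]; group
    · rw [show 2 * (k + 1) = 2 * k + 1 + 1 by ring, Finset.prod_range_succ',
        Finset.prod_range_succ']
      simp only [hshift]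
      ac_rfl

/-- The sign in `simpleSignedConj_mul_pow_apply` is `M i j`-periodic in `r`, so over
`r < 2 * M i j` every factor occurs twice. -/
theorem isLiftable_simpleSignedConj : M.IsLiftable cs.simpleSignedConj := by
  intro i j
  have hpm : (cs.simple i * cs.simple j) ^ M i j = 1 := cs.simple_mul_simple_pow i j
  ext ⟨t, ε⟩
  · simp [simpleSignedConj_mul_pow_apply, hpm]
  · simp [simpleSignedConj_mul_pow_apply, two_mul, Finset.prod_range_add, pow_add, hpm,
      Int.units_mul_self]

noncomputable def signedConj : W →* Equiv.Perm (W × ℤˣ) :=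
  cs.lift ⟨cs.simpleSignedConj, cs.isLiftable_simpleSignedConj⟩

theorem signedConj_simple (i : B) : cs.signedConj (cs.simple i) = cs.simpleSignedConj i :=
  cs.lift_apply_simple _ i

theorem signedConj_wordProd (ω : List B) (t : W) (ε : ℤˣ) :
    cs.signedConj (cs.wordProd ω) (t, ε) =
      (cs.wordProd ω * t * (cs.wordProd ω)⁻¹, ε * (-1) ^ (cs.rightInvSeq ω).count t) := by
  induction ω with
  | nil => simp
  | cons i ω ih =>
    have hcond : (cs.wordProd ω)⁻¹ * cs.simple i * cs.wordProd ω = t ↔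
        cs.wordProd ω * t * (cs.wordProd ω)⁻¹ = cs.simple i := by
      rw [mul_inv_eq_iff_eq_mul, mul_assoc, inv_mul_eq_iff_eq_mul, eq_comm]
    rw [cs.wordProd_cons, map_mul, Equiv.Perm.mul_apply, ih, signedConj_simple,
      simpleSignedConj_apply, rightInvSeq, List.count_cons]
    simp only [beq_iff_eq, hcond]
    ext
    · simp [mul_assoc]
    · split_ifs <;> simp [pow_succ]

noncomputable def reflSign (w t : W) : ℤˣ := (cs.signedConj w (t, 1)).2

theorem signedConj_apply (w t : W) (ε : ℤˣ) :
    cs.signedConj w (t, ε) = (w * t * w⁻¹, ε * cs.reflSign w t) := by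
  obtain ⟨ω, rfl⟩ := cs.wordProd_surjective w
  simp [reflSign, signedConj_wordProd]

theorem reflSign_wordProd (ω : List B) (t : W) :
    cs.reflSign (cs.wordProd ω) t = (-1) ^ (cs.rightInvSeq ω).count t := by
  simp [reflSign, signedConj_wordProd]

theorem reflSign_mul (u v t : W) :
    cs.reflSign (u * v) t = cs.reflSign u (v * t * v⁻¹) * cs.reflSign v t := by
  have := congrArg Prod.snd (signedConj_apply cs (u * v) t 1)
  rw [map_mul, Equiv.Perm.mul_apply, signedConj_apply, signedConj_apply] at this
  simpa [mul_comm] using this.symm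

theorem reflSign_simple (i : B) (t : W) :
    cs.reflSign (cs.simple i) t = if t = cs.simple i then -1 else 1 := by
  simp [reflSign, signedConj_simple, simpleSignedConj_apply]

theorem reflSign_inv_conj (w t : W) : cs.reflSign w⁻¹ (w * t * w⁻¹) = cs.reflSign w t := by
  have h := cs.reflSign_mul w⁻¹ w t
  rw [inv_mul_cancel, reflSign, map_one] at h
  rw [← mul_left_inj (cs.reflSign w t), Int.units_mul_self, ← h]
  rfl

theorem reflSign_self_of_isReflection {t : W} (ht : cs.IsReflection t) :
    cs.reflSign t t = -1 := by
  obtain ⟨u, i, rfl⟩ := ht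
  have hconj : u⁻¹ * (u * cs.simple i * u⁻¹) * u⁻¹⁻¹ = cs.simple i := by group
  have hs : cs.simple i * cs.simple i * (cs.simple i)⁻¹ = cs.simple i := by group
  rw [reflSign_mul, hconj, reflSign_inv_conj, reflSign_mul, hs, reflSign_simple, if_pos rfl,
    mul_neg_one, neg_mul, Int.units_mul_self]

theorem reflSign_wordProd_eq_neg_one_iff {ω : List B} (hω : cs.IsReduced ω) {t : W} :
    cs.reflSign (cs.wordProd ω) t = -1 ↔ t ∈ cs.rightInvSeq ω := by
  rw [reflSign_wordProd]
  by_cases ht : t ∈ cs.rightInvSeq ω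
  · simp [ht, List.count_eq_one_of_mem hω.nodup_rightInvSeq ht]
  · simp [ht, List.count_eq_zero_of_not_mem ht]

theorem isRightInversion_of_reflSign_eq_neg_one {w t : W} (h : cs.reflSign w t = -1) :
    cs.IsRightInversion w t := by
  obtain ⟨ω, hω, rfl⟩ := cs.exists_isReduced w
  exact cs.isRightInversion_of_mem_rightInvSeq hω ((reflSign_wordProd_eq_neg_one_iff cs hω).1 h)

theorem reflSign_eq_neg_one_iff {w t : W} : cs.reflSign w t = -1 ↔ cs.IsRightInversion w t := by
  refine ⟨cs.isRightInversion_of_reflSign_eq_neg_one, fun ⟨ht, hlt⟩ => ?_⟩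
  refine (Int.units_eq_one_or _).resolve_left fun h => ?_
  have hwt : cs.reflSign (w * t) t = -1 := by
    rw [reflSign_mul, mul_inv_cancel_right, h, reflSign_self_of_isReflection cs ht, one_mul]
  have := (cs.isRightInversion_of_reflSign_eq_neg_one hwt).2
  rw [mul_assoc, ht.mul_self, mul_one] at this
  omega

theorem reflSign_simple_eq_neg_one_iff {w : W} {i : B} :
    cs.reflSign w (cs.simple i) = -1 ↔ cs.IsRightDescent w i := by
  rw [reflSign_eq_neg_one_iff, isRightInversion_simple_iff_isRightDescent]

theorem length_mul_add_length_of_maximal {w₀ : W} (hmax : ∀ u, cs.length u ≤ cs.length w₀)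
    (u : W) : cs.length (w₀ * u) + cs.length u = cs.length w₀ := by
  have hrefl : ∀ t, cs.IsReflection t → cs.reflSign w₀ t = -1 := fun t ht =>
    cs.reflSign_eq_neg_one_iff.2 ⟨ht, (hmax _).lt_of_ne (ht.length_mul_left_ne w₀)⟩
  induction u using cs.simple_induction_right with
  | one => simp
  | mul_simple_right u i ih =>
    have hdescent : cs.IsRightDescent (w₀ * u) i ↔ ¬ cs.IsRightDescent u i := by
      rw [← reflSign_simple_eq_neg_one_iff, ← reflSign_simple_eq_neg_one_iff, reflSign_mul,
        hrefl _ ((cs.isReflection_simple i).conj u), neg_one_mul, neg_inj,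
        ← Int.units_ne_iff_eq_neg, Ne, not_not]
    have h₁ := cs.length_mul_simple (w₀ * u) i
    have h₂ := cs.length_mul_simple u i
    simp only [IsRightDescent, mul_assoc] at hdescent h₁
    omega

theorem length_simple_conj_of_mul_self {x : W} (hx : x * x = 1) {i : B}
    (hxi : cs.simple i * x ≠ x * cs.simple i) :
    cs.length (cs.simple i * x * cs.simple i) = cs.length x + 2 ∨
      cs.length x = cs.length (cs.simple i * x * cs.simple i) + 2 := by
  have hx_inv : x⁻¹ = x := inv_eq_of_mul_eq_one_right hx
  have hlen : cs.length (x * cs.simple i) = cs.length (cs.simple i * x) := by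
    rw [← cs.length_inv, mul_inv_rev, hx_inv, cs.inv_simple]
  have hne : x * cs.simple i * x⁻¹ ≠ cs.simple i := fun h => hxi <| by
    nth_rewrite 1 [← h]
    rw [hx_inv, mul_assoc, hx, mul_one]
  have hdescent : cs.IsRightDescent (cs.simple i * x) i ↔ cs.IsRightDescent x i := by
    rw [← reflSign_simple_eq_neg_one_iff, ← reflSign_simple_eq_neg_one_iff, reflSign_mul,
      reflSign_simple, if_neg hne, one_mul]
  have h₁ := cs.length_mul_simple x i
  have h₂ := cs.length_mul_simple (cs.simple i * x) i
  simp only [IsRightDescent] at hdescent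
  omega

theorem neg_one_pow_length_mul {R : Type*} [Ring R] (u v : W) :
    (-1 : R) ^ cs.length (u * v) = (-1) ^ cs.length u * (-1) ^ cs.length v := by
  rw [neg_one_pow_eq_pow_mod_two, cs.length_mul_mod_two, ← neg_one_pow_eq_pow_mod_two, pow_add]

theorem comp_eq_neg_one_pow_length_smul_comp {k V V' : Type*} [CommRing k] [AddCommGroup V]
    [Module k V] [AddCommGroup V'] [Module k V'] {ρ : Representation k W V}
    {ρ' : Representation k W V'} {T : V →ₗ[k] V'}
    (h : ∀ i, ρ' (cs.simple i) ∘ₗ T = -(T ∘ₗ ρ (cs.simple i))) (g : W) :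
    ρ' g ∘ₗ T = (-1 : k) ^ cs.length g • (T ∘ₗ ρ g) := by
  induction g using cs.simple_induction with
  | simple i => simp [h i, cs.length_simple]
  | one => simp [Module.End.one_eq_id]
  | mul u v hu hv =>
    rw [map_mul, map_mul, Module.End.mul_eq_comp, LinearMap.comp_assoc, hv, LinearMap.comp_smul,
      ← LinearMap.comp_assoc, hu, LinearMap.smul_comp, smul_smul, neg_one_pow_length_mul,
      mul_comm, Module.End.mul_eq_comp, LinearMap.comp_assoc]

noncomputable def lusztigVoganSign (i : B) (w : W) : ℝ :=
  if cs.simple i * w = w * cs.simple i ∧ cs.length (cs.simple i * w) < cs.length w then -1 else 1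

theorem ite_neg_single_eq_lusztigVoganSign_smul {D : Finset W} (i : B) (w w' : D)
    (hw' : w'.1 = cs.simple i * w.1 * cs.simple i) :
    (if cs.simple i * w.1 = w.1 * cs.simple i ∧ cs.length (cs.simple i * w.1) < cs.length w.1
      then -(Pi.single w (1 : ℝ)) else Pi.single w' 1) =
      cs.lusztigVoganSign i w • Pi.single w' 1 := by
  unfold lusztigVoganSign
  split_ifs with h
  · have : w' = w := Subtype.ext (by rw [hw', h.1, cs.simple_mul_simple_cancel_right])
    simp [this]
  · simp

theorem lusztigVoganSign_mul_longest {w₀ : W} (hmax : ∀ u, cs.length u ≤ cs.length w₀)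
    (hcentral : ∀ u, u * w₀ = w₀ * u) {x : W} (hx : x * x = 1) (i : B) :
    cs.lusztigVoganSign i (x * w₀) * (-1) ^ (cs.length x / 2) =
      -(cs.lusztigVoganSign i x * (-1) ^ (cs.length (cs.simple i * x * cs.simple i) / 2)) := by
  have hlen : ∀ u, cs.length (u * w₀) + cs.length u = cs.length w₀ := fun u => by
    rw [hcentral]; exact cs.length_mul_add_length_of_maximal hmax u
  have hcomm : cs.simple i * (x * w₀) = x * w₀ * cs.simple i ↔
      cs.simple i * x = x * cs.simple i := by
    rw [mul_assoc x, ← hcentral, ← mul_assoc, ← mul_assoc, mul_left_inj]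
  by_cases hc : cs.simple i * x = x * cs.simple i
  · have hsxs : cs.simple i * x * cs.simple i = x := by
      rw [hc, cs.simple_mul_simple_cancel_right]
    have hdescent : cs.length (cs.simple i * (x * w₀)) < cs.length (x * w₀) ↔
        ¬ cs.length (cs.simple i * x) < cs.length x := by
      have h₁ := hlen x
      have h₂ := hlen (cs.simple i * x)
      rw [mul_assoc] at h₂
      have h₃ := cs.length_simple_mul x i
      omega
    simp only [lusztigVoganSign, hsxs, hcomm, hdescent, and_iff_right hc]
    split_ifs <;> ring
  · have hstep : ∀ n, (-1 : ℝ) ^ ((n + 2) / 2) = -(-1) ^ (n / 2) := fun n => by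
      rw [Nat.add_div_right n two_pos, pow_succ, mul_neg_one]
    have hsign : (-1 : ℝ) ^ (cs.length (cs.simple i * x * cs.simple i) / 2) =
        -(-1) ^ (cs.length x / 2) := by
      rcases cs.length_simple_conj_of_mul_self hx hc with h | h <;> rw [h, hstep]
      rw [neg_neg]
    simp [lusztigVoganSign, hcomm, hc, hsign]

end CoxeterSystem

/-- Let `W` be a finite Coxeter group whose longest element `w₀` is central, and let
`C` be a conjugacy class of involutions in `W`.  Let `V_C` be the Lusztig–Vogan
`W`-representation over `ℝ` with basis `{a_w : w ∈ C}`, where for a simple reflection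
`s` and `w ∈ C` we have `s · a_w = −a_w` if `sw = ws` and `ℓ(sw) < ℓ(w)`, and
`s · a_w = a_{sws}` otherwise; let `ρ_C` be its character.  Then
`ρ_{C w₀} = ρ_C ⊗ ε`, where `ε` is the sign character of `W`. -/
theorem kottwitz_character_mul_longest_element
    {B W : Type*} [Group W] {M : CoxeterMatrix B} (cs : CoxeterSystem M W)
    (w0 : W) (hw0max : ∀ u : W, cs.length u ≤ cs.length w0)
    (hw0c : ∀ u : W, u * w0 = w0 * u)
    (C C' : Finset W)
    (hCinv : ∀ w ∈ C, w * w = 1)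
    (hCconj : ∀ w ∈ C, ∀ x : W, x * w * x⁻¹ ∈ C)
    (hC' : ∀ y : W, y ∈ C' ↔ ∃ x ∈ C, y = x * w0)
    (hC'conj : ∀ w ∈ C', ∀ x : W, x * w * x⁻¹ ∈ C')
    (π : Representation ℝ W ({x // x ∈ C} → ℝ))
    (π' : Representation ℝ W ({x // x ∈ C'} → ℝ))
    (hπ : ∀ (i : B) (w : {x // x ∈ C}),
      π (cs.simple i) (Pi.single w 1) =
        if cs.simple i * w.1 = w.1 * cs.simple i ∧
            cs.length (cs.simple i * w.1) < cs.length w.1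
        then -(Pi.single w 1)
        else Pi.single
          ⟨cs.simple i * w.1 * cs.simple i, by
            have := hCconj w.1 w.2 (cs.simple i)
            rwa [cs.inv_simple] at this⟩ 1)
    (hπ' : ∀ (i : B) (w : {x // x ∈ C'}),
      π' (cs.simple i) (Pi.single w 1) =
        if cs.simple i * w.1 = w.1 * cs.simple i ∧
            cs.length (cs.simple i * w.1) < cs.length w.1
        then -(Pi.single w 1)
        else Pi.single
          ⟨cs.simple i * w.1 * cs.simple i, by
            have := hC'conj w.1 w.2 (cs.simple i)
            rwa [cs.inv_simple] at this⟩ 1) :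
    ∀ g : W, LinearMap.trace ℝ _ (π' g) =
      (-1 : ℝ) ^ cs.length g * LinearMap.trace ℝ _ (π g) := by
  intro g
  have hmem : ∀ x : W, x ∈ C ↔ x * w0 ∈ C' := fun x => by
    rw [hC']
    exact ⟨fun hx => ⟨x, hx, rfl⟩, fun ⟨y, hy, h⟩ => mul_right_cancel h ▸ hy⟩
  let e : C ≃ C' := (Equiv.mulRight w0).subtypeEquiv hmem
  let T : (C → ℝ) ≃ₗ[ℝ] (C' → ℝ) := (Pi.basisFun ℝ C).equiv
    ((Pi.basisFun ℝ C').unitsSMul fun y => (-1) ^ (cs.length (e.symm y).1 / 2)) e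
  have hT : ∀ x : C,
      T (Pi.single x 1) = (-1 : ℝ) ^ (cs.length x.1 / 2) • Pi.single (e x) 1 := fun x => by
    rw [← Pi.basisFun_apply, Module.Basis.equiv_apply, Module.Basis.unitsSMul_apply]
    simp [Units.smul_def]
  refine LinearMap.trace_eq_mul_trace_of_comp_eq T
    (cs.comp_eq_neg_one_pow_length_smul_comp (fun i => ?_) g)
  refine (Pi.basisFun ℝ C).ext fun x => ?_
  simp only [LinearMap.comp_apply, LinearMap.neg_apply, Pi.basisFun_apply, LinearEquiv.coe_coe]
  rw [hπ, cs.ite_neg_single_eq_lusztigVoganSign_smul i x _ rfl, map_smul, hT, map_smul, hT, hπ',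
    cs.ite_neg_single_eq_lusztigVoganSign_smul i (e x) _ rfl, smul_smul, smul_smul, ← neg_smul,
    mul_comm]
  congr 2
  · exact cs.lusztigVoganSign_mul_longest hw0max hw0c (hCinv x.1 x.2) i
  · refine Subtype.ext ?_
    change cs.simple i * (x.1 * w0) * cs.simple i = cs.simple i * x.1 * cs.simple i * w0
    rw [← mul_assoc, mul_assoc _ w0, ← hw0c, ← mul_assoc]
end

section
/- Let W be a finite Coxeter group, C a conjugacy class of involutions in W, and V_C the Lusztig–Vogan representation with basis {a_w : w ∈ C} as above. For a standard parabolic subgroup W' = ⟨S'⟩ with S' ⊆ S, the subspace U spanned by {a_w : w ∈ C ∩ W'} is a W'-submodule of V_C, and the character of W' on U equals ρ_{C∩W'} (the sum over conjugacy classes of involutions of W' contained in C ∩ W' of the corresponding Lusztig–Vogan characters of W'). -/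
open scoped Classical

/-- Let `W` be a finite Coxeter group, `C` a conjugacy class of involutions in `W`, and
`V_C` the Lusztig–Vogan representation with basis `{a_w : w ∈ C}`.  For a standard
parabolic subgroup `W' = ⟨S'⟩` with `S' ⊆ S`, the subspace `U` spanned by
`{a_w : w ∈ C ∩ W'}` is a `W'`-submodule of `V_C`, and the character of `W'` on `U`
equals `ρ_{C ∩ W'}` (the Lusztig–Vogan character of `W'` attached to the union of
conjugacy classes of involutions `C ∩ W'` of `W'`). -/
theorem kottwitz_representation_parabolic_restriction
    {B W : Type*} [Group W] [Fintype W] {M : CoxeterMatrix B} (cs : CoxeterSystem M W)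
    (C : Finset W)
    (hCinv : ∀ w ∈ C, w * w = 1)
    (hCcl : ∃ x : W, ∀ y : W, y ∈ C ↔ IsConj x y)
    (hCconj : ∀ w ∈ C, ∀ x : W, x * w * x⁻¹ ∈ C)
    (π : Representation ℝ W ({x // x ∈ C} → ℝ))
    (hπ : ∀ (i : B) (w : {x // x ∈ C}),
      π (cs.simple i) (Pi.single w 1) =
        if cs.simple i * w.1 = w.1 * cs.simple i ∧
            cs.length (cs.simple i * w.1) < cs.length w.1
        then -(Pi.single w 1)
        else Pi.single
          ⟨cs.simple i * w.1 * cs.simple i, by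
            have := hCconj w.1 w.2 (cs.simple i)
            rwa [cs.inv_simple] at this⟩ 1)
    (S' : Set B)
    (W' : Subgroup W) (hW' : W' = Subgroup.closure (cs.simple '' S'))
    (U : Submodule ℝ ({x // x ∈ C} → ℝ))
    (hU' : U = Submodule.span ℝ
      {v | ∃ w : {x // x ∈ C}, (w : W) ∈ W' ∧ v = Pi.single w (1 : ℝ)})
    (π' : Representation ℝ W' ({x : W // x ∈ C ∧ x ∈ W'} → ℝ))
    (hπ' : ∀ (i : B) (hi : i ∈ S') (w : {x : W // x ∈ C ∧ x ∈ W'}),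
      π' ⟨cs.simple i, by rw [hW']; exact Subgroup.subset_closure ⟨i, hi, rfl⟩⟩
          (Pi.single w 1) =
        if cs.simple i * w.1 = w.1 * cs.simple i ∧
            cs.length (cs.simple i * w.1) < cs.length w.1
        then -(Pi.single w 1)
        else Pi.single
          ⟨cs.simple i * w.1 * cs.simple i, by
            constructor
            · have := hCconj w.1 w.2.1 (cs.simple i)
              rwa [cs.inv_simple] at this
            · have hs : cs.simple i ∈ W' := by
                rw [hW']; exact Subgroup.subset_closure ⟨i, hi, rfl⟩
              exact mul_mem (mul_mem hs w.2.2) hs⟩ 1) :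
    ∃ hU : ∀ g : W, g ∈ W' → ∀ v ∈ U, π g v ∈ U,
      ∀ g : W', LinearMap.trace ℝ _ (π' g) =
        LinearMap.trace ℝ U ((π (g : W)).restrict (hU (g : W) g.2)) := by
  classical
  -- the natural "extension by zero" inclusion map
  let φ : ({x : W // x ∈ C ∧ x ∈ W'} → ℝ) →ₗ[ℝ] ({x // x ∈ C} → ℝ) :=
    { toFun := fun f w => if h : (w : W) ∈ W' then f ⟨w.1, w.2, h⟩ else 0
      map_add' := by
        intro f g; funext w; by_cases h : (w : W) ∈ W' <;> simp [h]
      map_smul' := by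
        intro c f; funext w; by_cases h : (w : W) ∈ W' <;> simp [h] }
  have hφ_single : ∀ d : {x : W // x ∈ C ∧ x ∈ W'},
      φ (Pi.single d 1) = Pi.single (⟨d.1, d.2.1⟩ : {x // x ∈ C}) 1 := by
    intro d
    funext w
    by_cases h : (w : W) ∈ W'
    · simp only [φ, LinearMap.coe_mk, AddHom.coe_mk, dif_pos h]
      rw [Pi.single_apply, Pi.single_apply]
      have hiff : (⟨(w : W), w.2, h⟩ : {x : W // x ∈ C ∧ x ∈ W'}) = d ↔
          w = (⟨d.1, d.2.1⟩ : {x // x ∈ C}) := by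
        constructor
        · intro h'
          have hv : (w : W) = (d : W) := congrArg Subtype.val h'
          exact Subtype.ext hv
        · intro h'
          have hv : (w : W) = (d : W) := congrArg Subtype.val h'
          exact Subtype.ext hv
      simp only [hiff]
    · simp only [φ, LinearMap.coe_mk, AddHom.coe_mk, dif_neg h]
      rw [Pi.single_apply, if_neg]
      intro hw
      exact h (by rw [hw]; exact d.2.2)
  have hφ_inj : Function.Injective φ := by
    intro f g hfg
    funext d
    have h1 := congrFun hfg ⟨d.1, d.2.1⟩
    simpa [φ, dif_pos d.2.2] using h1
  have hbf : ⇑(Pi.basisFun ℝ {x : W // x ∈ C ∧ x ∈ W'}) =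
      fun d => Pi.single d (1 : ℝ) :=
    funext fun d => Pi.basisFun_apply ℝ _ d
  have hsp : Submodule.span ℝ
      (Set.range fun d : {x : W // x ∈ C ∧ x ∈ W'} => Pi.single d (1 : ℝ)) = ⊤ := by
    rw [← hbf]; exact (Pi.basisFun ℝ _).span_eq
  have hrange : LinearMap.range φ = U := by
    rw [LinearMap.range_eq_map, ← hsp, Submodule.map_span, hU']
    congr 1
    ext v
    constructor
    · rintro ⟨_, ⟨d, rfl⟩, rfl⟩
      refine ⟨⟨d.1, d.2.1⟩, d.2.2, ?_⟩
      exact hφ_single d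
    · rintro ⟨w, hw, rfl⟩
      refine ⟨Pi.single ⟨w.1, w.2, hw⟩ 1, ⟨⟨w.1, w.2, hw⟩, rfl⟩, ?_⟩
      rw [hφ_single]
  have hsmem : ∀ i ∈ S', cs.simple i ∈ W' := fun i hi => by
    rw [hW']; exact Subgroup.subset_closure ⟨i, hi, rfl⟩
  -- the intertwining property for simple generators
  have hbase : ∀ (i : B) (hi : i ∈ S'),
      (π (cs.simple i)).comp φ = φ.comp (π' ⟨cs.simple i, hsmem i hi⟩) := by
    intro i hi
    apply (Pi.basisFun ℝ _).ext
    intro d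
    rw [Pi.basisFun_apply]
    simp only [LinearMap.comp_apply]
    rw [hφ_single d, hπ i ⟨d.1, d.2.1⟩, hπ' i hi d]
    have hred : ((⟨d.1, d.2.1⟩ : {x // x ∈ C}) : W) = (d : W) := rfl
    by_cases hcond : cs.simple i * (d : W) = (d : W) * cs.simple i ∧
        cs.length (cs.simple i * (d : W)) < cs.length (d : W)
    · simp only [hred, if_pos hcond, map_neg, hφ_single]
    · simp only [hred, if_neg hcond, hφ_single]
  -- the intertwining property for all elements of W'
  have key : ∀ (g : W) (hg : g ∈ Subgroup.closure (cs.simple '' S')),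
      (π g).comp φ = φ.comp (π' ⟨g, by rw [hW']; exact hg⟩) := by
    intro g hg
    refine Subgroup.closure_induction
      (p := fun g hg => (π g).comp φ = φ.comp (π' ⟨g, by rw [hW']; exact hg⟩))
      ?_ ?_ ?_ ?_ hg
    · rintro x ⟨i, hi, rfl⟩
      exact hbase i hi
    · show (π 1).comp φ = φ.comp (π' 1)
      rw [map_one, map_one]
      exact LinearMap.ext fun f => rfl
    · intro x y hx hy ihx ihy
      show (π (x * y)).comp φ =
        φ.comp (π' (⟨x, by rw [hW']; exact hx⟩ * ⟨y, by rw [hW']; exact hy⟩))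
      rw [map_mul, map_mul, Module.End.mul_eq_comp, Module.End.mul_eq_comp,
        LinearMap.comp_assoc, ihy, ← LinearMap.comp_assoc, ihx, LinearMap.comp_assoc]
    · intro x hx ih
      show (π x⁻¹).comp φ = φ.comp (π' (⟨x, by rw [hW']; exact hx⟩)⁻¹)
      refine LinearMap.ext fun f => ?_
      simp only [LinearMap.comp_apply]
      set x' : W' := ⟨x, by rw [hW']; exact hx⟩ with hx'
      have h2 : (π x) (φ ((π' x'⁻¹) f)) = φ f := by
        have h3 := LinearMap.congr_fun ih ((π' x'⁻¹) f)
        simp only [LinearMap.comp_apply] at h3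
        rw [h3, ← Module.End.mul_apply, ← map_mul, mul_inv_cancel, map_one,
          Module.End.one_apply]
      calc (π x⁻¹) (φ f) = (π x⁻¹) ((π x) (φ ((π' x'⁻¹) f))) := by rw [h2]
        _ = φ ((π' x'⁻¹) f) := by
            rw [← Module.End.mul_apply, ← map_mul, inv_mul_cancel, map_one,
              Module.End.one_apply]
  have key' : ∀ (g : W) (hg : g ∈ W'),
      (π g).comp φ = φ.comp (π' ⟨g, hg⟩) := by
    intro g hg
    exact key g (by rw [← hW']; exact hg)
  have hUinv : ∀ g : W, g ∈ W' → ∀ v ∈ U, π g v ∈ U := by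
    intro g hg v hv
    rw [← hrange] at hv ⊢
    obtain ⟨f, rfl⟩ := hv
    have h5 := LinearMap.congr_fun (key' g hg) f
    simp only [LinearMap.comp_apply] at h5
    rw [h5]
    exact ⟨_, rfl⟩
  refine ⟨hUinv, ?_⟩
  intro g
  have hmem : ∀ f, φ f ∈ U := fun f => hrange ▸ LinearMap.mem_range_self φ f
  let φ₀ : ({x : W // x ∈ C ∧ x ∈ W'} → ℝ) →ₗ[ℝ] U :=
    LinearMap.codRestrict U φ hmem
  have hbij : Function.Bijective φ₀ := by
    constructor
    · intro a b hab
      exact hφ_inj (congrArg Subtype.val hab)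
    · intro u
      have h6 : (u : {x // x ∈ C} → ℝ) ∈ LinearMap.range φ := by
        rw [hrange]; exact u.2
      obtain ⟨f, hf⟩ := h6
      exact ⟨f, Subtype.ext hf⟩
  let e : ({x : W // x ∈ C ∧ x ∈ W'} → ℝ) ≃ₗ[ℝ] U := LinearEquiv.ofBijective φ₀ hbij
  have hconj : (π (g : W)).restrict (hUinv (g : W) g.2) = e.conj (π' g) := by
    refine LinearMap.ext fun u => ?_
    obtain ⟨f, rfl⟩ := e.surjective u
    apply Subtype.ext
    have h7 := LinearMap.congr_fun (key' (g : W) g.2) f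
    simp only [LinearMap.comp_apply] at h7
    have h8 : (⟨(g : W), g.2⟩ : W') = g := rfl
    rw [h8] at h7
    calc ((π (g : W)).restrict (hUinv (g : W) g.2) (e f) : {x // x ∈ C} → ℝ)
        = π (g : W) (φ f) := rfl
      _ = φ ((π' g) f) := h7
      _ = (e ((π' g) f) : {x // x ∈ C} → ℝ) := rfl
      _ = (e.conj (π' g) (e f) : {x // x ∈ C} → ℝ) := by
          simp [LinearEquiv.conj_apply]
  rw [hconj, LinearMap.trace_conj']
end
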